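/- arXiv:1208.2653 — 3 statements merged into one kernel-verified Lean document; each statement's English description precedes it below -/
import Mathlib

section
/- If n is a positive odd integer, then the cardinality of (ℤ[i]/nℤ[i])^× equals n² · ∏_{p | n} (1 - 1/p)(1 - χ(p)/p), where χ(p) = (-1)^((p-1)/2) is the quadratic character of -1 mod p. -/
/-!
`Φ` is multiplicative by the Chinese remainder theorem. Modulo `p ^ k` an element is a unit as
soon as it is one modulo `p`, because the kernel of `ℤ[i]/(p ^ k) → ℤ[i]/(p)` is nilpotent; counting
fibres gives `Φ(p ^ k) = p ^ (2k - 2) Φ(p)`. Finally `ℤ[i]/(p) ≅ 𝔽_p × 𝔽_p` through `i ↦ (u, -u)`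
when `p ≡ 1 (mod 4)` and `u² = -1`, while `ℤ[i]/(p)` is a field with `p²` elements when
`p ≡ 3 (mod 4)`; in both cases `Φ(p) = (p - 1)(p - χ(p))`.
-/

open Ideal

theorem IsNilpotent.card_units_eq_card_mul_card_units_quotient {R : Type*} [CommRing R]
    {J : Ideal R} (hJ : IsNilpotent J) : Nat.card Rˣ = Nat.card J * Nat.card (R ⧸ J)ˣ := by
  have hunits : {x : R | IsUnit x} = Ideal.Quotient.mk J ⁻¹' {y | IsUnit y} :=
    Set.ext fun x => (hJ.isUnit_quotient_mk_iff).symm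
  calc Nat.card Rˣ = Nat.card {x : R | IsUnit x} :=
        Nat.card_congr (Equiv.ofInjective _ Units.val_injective)
    _ = Nat.card J * Nat.card {y : R ⧸ J | IsUnit y} := by
        rw [hunits, ← Nat.card_prod]
        exact Nat.card_congr (QuotientAddGroup.preimageMkEquivAddSubgroupProdSet J.toAddSubgroup _)
    _ = Nat.card J * Nat.card (R ⧸ J)ˣ := by
        rw [Nat.card_congr (Equiv.ofInjective _ (Units.val_injective (α := R ⧸ J)))]
        rfl

theorem Ideal.card_units_quotient_pow_mul_card {S : Type*} [CommRing S] (I : Ideal S) {n : ℕ}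
    (hn : n ≠ 0) :
    Nat.card (S ⧸ I ^ n)ˣ * Nat.card (S ⧸ I) = Nat.card (S ⧸ I ^ n) * Nat.card (S ⧸ I)ˣ := by
  set J : Ideal (S ⧸ I ^ n) := I.map (Ideal.Quotient.mk (I ^ n))
  have hJ : IsNilpotent J := ⟨n, by simp [J, ← Ideal.map_pow]⟩
  have e : (S ⧸ I ^ n) ⧸ J ≃+* S ⧸ I := DoubleQuot.quotQuotEquivQuotOfLE (Ideal.pow_le_self hn)
  have hcard : Nat.card (S ⧸ I ^ n) = Nat.card ((S ⧸ I ^ n) ⧸ J) * Nat.card J :=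
    AddSubgroup.card_eq_card_quotient_mul_card_addSubgroup J.toAddSubgroup
  rw [hJ.card_units_eq_card_mul_card_units_quotient, hcard, ← Nat.card_congr e.toEquiv,
    ← Nat.card_congr (Units.mapEquiv e.toMulEquiv).toEquiv]
  ring

theorem Ideal.card_units_quotient_span_natCast_mul {R : Type*} [CommRing R] {m n : ℕ}
    (h : m.Coprime n) :
    Nat.card (R ⧸ span {((m * n : ℕ) : R)})ˣ =
      Nat.card (R ⧸ span {(m : R)})ˣ * Nat.card (R ⧸ span {(n : R)})ˣ := by
  have hco : IsCoprime (span {(m : R)}) (span {(n : R)}) :=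
    (isCoprime_span_singleton_iff _ _).mpr h.cast
  have e : R ⧸ span {((m * n : ℕ) : R)} ≃+* (R ⧸ span {(m : R)}) × R ⧸ span {(n : R)} := by
    rw [Nat.cast_mul, ← span_singleton_mul_span_singleton]
    exact quotientMulEquivQuotientProd _ _ hco
  rw [Nat.card_congr ((Units.mapEquiv e.toMulEquiv).trans MulEquiv.prodUnits).toEquiv,
    Nat.card_prod]

theorem Ideal.card_units_quotient_span_natCast_one {R : Type*} [CommRing R] :
    Nat.card (R ⧸ span {((1 : ℕ) : R)})ˣ = 1 := by
  have : Subsingleton (R ⧸ span {((1 : ℕ) : R)}) := by simp [span_singleton_one]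
  exact Nat.card_unique

namespace GaussianInt

theorem card_quotient_span_natCast (m : ℕ) [NeZero m] :
    Nat.card (GaussianInt ⧸ span {(m : GaussianInt)}) = m ^ 2 := by
  let g : GaussianInt →+ ZMod m × ZMod m :=
    { toFun := fun z => (z.re, z.im)
      map_zero' := by simp
      map_add' := fun z w => by simp }
  have hker : g.ker = (span {(m : GaussianInt)}).toAddSubgroup := by
    ext z
    rw [AddMonoidHom.mem_ker, Submodule.mem_toAddSubgroup, mem_span_singleton,
      ← Int.cast_natCast, Zsqrtd.intCast_dvd]
    simp [g, ZMod.intCast_zmod_eq_zero_iff_dvd]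
  have hg : Function.Surjective g := fun ab => ⟨⟨ab.1.val, ab.2.val⟩, by simp [g]⟩
  calc Nat.card (GaussianInt ⧸ span {(m : GaussianInt)}) = Nat.card (GaussianInt ⧸ g.ker) := by
        rw [hker]; rfl
    _ = Nat.card (ZMod m × ZMod m) :=
        Nat.card_congr (QuotientAddGroup.quotientKerEquivOfSurjective g hg).toEquiv
    _ = m ^ 2 := by simp [sq]

theorem card_units_quotient_span_natCast_of_mul_self_eq_neg_one {N : ℕ} [NeZero N] (hN : Odd N)
    {u : ZMod N} (hu : u * u = -1) :
    Nat.card (GaussianInt ⧸ span {(N : GaussianInt)})ˣ = Nat.card (ZMod N)ˣ ^ 2 := by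
  let φ : GaussianInt →+* ZMod N × ZMod N := Zsqrtd.lift ⟨(u, -u), by ext <;> simp [hu]⟩
  have hφ (z : GaussianInt) : φ z = (z.re + z.im * u, z.re - z.im * u) := by
    ext <;> simp [φ, sub_eq_add_neg]
  let ψ := Ideal.Quotient.lift (span {(N : GaussianInt)}) φ fun z hz => by
    obtain ⟨w, rfl⟩ := Ideal.mem_span_singleton'.mp hz
    simp [hφ, Prod.ext_iff]
  obtain ⟨half, hhalf⟩ := ((ZMod.isUnit_prime_iff_not_dvd Nat.prime_two).mpr
    (Nat.not_even_iff_odd.mpr hN ∘ even_iff_two_dvd.mpr)).exists_right_inv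
  have hinj : Function.Injective ψ := by
    refine (injective_iff_map_eq_zero ψ).mpr fun x hx => ?_
    obtain ⟨z, rfl⟩ := Ideal.Quotient.mk_surjective x
    obtain ⟨hre, him⟩ := Prod.mk_eq_zero.mp ((hφ z).symm.trans hx)
    rw [Ideal.Quotient.eq_zero_iff_mem, mem_span_singleton, ← Int.cast_natCast, Zsqrtd.intCast_dvd,
      ← ZMod.intCast_zmod_eq_zero_iff_dvd, ← ZMod.intCast_zmod_eq_zero_iff_dvd]
    push_cast at hhalf
    constructor
    · linear_combination half * hre + half * him - (z.re : ZMod N) * hhalf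
    · linear_combination (-half * u) * hre + (half * u) * him - (z.im : ZMod N) * hhalf +
        (2 * z.im * half : ZMod N) * hu
  have hcard : Nat.card (GaussianInt ⧸ span {(N : GaussianInt)}) = Nat.card (ZMod N × ZMod N) := by
    rw [card_quotient_span_natCast, Nat.card_prod, Nat.card_zmod, sq]
  let e := RingEquiv.ofBijective ψ ((Nat.bijective_iff_injective_and_card ψ).mpr ⟨hinj, hcard⟩)
  rw [Nat.card_congr ((Units.mapEquiv e.toMulEquiv).trans MulEquiv.prodUnits).toEquiv,
    Nat.card_prod, sq]

theorem card_units_quotient_span_prime_of_mod_four_eq_three {p : ℕ} [Fact p.Prime]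
    (hp : p % 4 = 3) : Nat.card (GaussianInt ⧸ span {(p : GaussianInt)})ˣ = p ^ 2 - 1 := by
  have : (span {(p : GaussianInt)}).IsMaximal :=
    PrincipalIdealRing.isMaximal_of_irreducible
      ((prime_iff_mod_four_eq_three_of_nat_prime p).mpr hp).irreducible
  let := Quotient.field (span {(p : GaussianInt)})
  rw [Nat.card_units, card_quotient_span_natCast]

theorem card_units_quotient_span_prime {p : ℕ} (hp : p.Prime) (hodd : Odd p) :
    (Nat.card (GaussianInt ⧸ span {(p : GaussianInt)})ˣ : ℚ) =
      (p - 1) * (p - (-1) ^ ((p - 1) / 2)) := by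
  have : Fact p.Prime := ⟨hp⟩
  rcases Nat.odd_mod_four_iff.mp (Nat.odd_iff.mp hodd) with h1 | h3
  · obtain ⟨u, hu⟩ := ZMod.exists_sq_eq_neg_one_iff.mpr (by omega : p % 4 ≠ 3)
    have hχ : Even ((p - 1) / 2) := by rw [Nat.even_iff]; omega
    rw [card_units_quotient_span_natCast_of_mul_self_eq_neg_one hodd hu.symm,
      Nat.card_eq_fintype_card, ZMod.card_units, hχ.neg_one_pow]
    push_cast [hp.one_le]
    ring
  · have hχ : Odd ((p - 1) / 2) := by rw [Nat.odd_iff]; omega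
    rw [card_units_quotient_span_prime_of_mod_four_eq_three h3, hχ.neg_one_pow]
    push_cast [Nat.one_le_pow _ _ hp.pos]
    ring

theorem card_units_quotient_span_prime_pow {p k : ℕ} (hp : p.Prime) (hodd : Odd p) (hk : k ≠ 0) :
    (Nat.card (GaussianInt ⧸ span {((p ^ k : ℕ) : GaussianInt)})ˣ : ℚ) =
      ((p ^ k : ℕ) : ℚ) ^ 2 * ((1 - 1 / (p : ℚ)) * (1 - (-1 : ℚ) ^ ((p - 1) / 2) / (p : ℚ))) := by
  have : NeZero p := ⟨hp.ne_zero⟩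
  have h := card_units_quotient_pow_mul_card (span {(p : GaussianInt)}) hk
  rw [span_singleton_pow, ← Nat.cast_pow, card_quotient_span_natCast,
    card_quotient_span_natCast] at h
  have hp0 : (p : ℚ) ≠ 0 := by exact_mod_cast hp.ne_zero
  have hQ := congrArg (Nat.cast : ℕ → ℚ) h
  push_cast at hQ
  rw [card_units_quotient_span_prime hp hodd] at hQ
  push_cast
  field_simp
  linear_combination hQ

end GaussianInt

theorem stmt_5 (n : ℕ) (hn : 0 < n) (hodd : Odd n) :
    (Nat.card (GaussianInt ⧸ Ideal.span {(n : GaussianInt)})ˣ : ℚ) =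
      (n : ℚ) ^ 2 * ∏ p ∈ n.primeFactors,
        ((1 - 1 / (p : ℚ)) * (1 - (-1 : ℚ) ^ ((p - 1) / 2) / (p : ℚ))) := by
  rw [Nat.multiplicative_factorization
      (fun m => (Nat.card (GaussianInt ⧸ span {(m : GaussianInt)})ˣ : ℚ))
      (fun a b h => by simp only [card_units_quotient_span_natCast_mul h, Nat.cast_mul])
      (by simp only [card_units_quotient_span_natCast_one, Nat.cast_one]) hn.ne',
    Nat.prod_factorization_eq_prod_primeFactors]
  have hsq : (n : ℚ) ^ 2 = ∏ p ∈ n.primeFactors, ((p ^ n.factorization p : ℕ) : ℚ) ^ 2 := by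
    rw [Finset.prod_pow, ← Nat.cast_prod, ← Nat.prod_primeFactors_pow_factorization hn.ne']
  rw [hsq, ← Finset.prod_mul_distrib]
  refine Finset.prod_congr rfl fun p hp => ?_
  exact GaussianInt.card_units_quotient_span_prime_pow (Nat.prime_of_mem_primeFactors hp)
    (hodd.of_dvd_nat (Nat.dvd_of_mem_primeFactors hp))
    (Finsupp.mem_support_iff.mp (by rwa [Nat.support_factorization]))
end

section
/- Let β ∈ ℤ[i] be coprime to 1+i, let ϖ > 0, let L = ℤ(1+i)ϖ + ℤ(1-i)ϖ, and let δ_β = (1+i)ϖ/β. If α, α' ∈ ℤ[i] satisfy αδ_β = (-1)^(m+n) α' δ_β + (m + ni)ϖ for some m, n ∈ ℤ, then α ≡ α' (mod β). -/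
/-!
Multiplying the hypothesis by `β / ϖ` turns it into the identity
`α (1 + i) = ± α' (1 + i) + (m + n i) β` in `ℤ[i]`. Since `β` is prime to `1 + i`, the prime `1 + i`
divides `m + n i`, which forces `m + n` to be even; so the sign is `+`, and cancelling `1 + i`
exhibits `α - α'` as a multiple of `β`.
-/

open Complex

namespace GaussianInt

theorem not_isUnit_one_add_I : ¬IsUnit (⟨1, 1⟩ : GaussianInt) := by
  rw [← Zsqrtd.norm_eq_one_iff]
  decide

theorem even_re_add_im_of_one_add_I_dvd {z : GaussianInt} (h : (⟨1, 1⟩ : GaussianInt) ∣ z) :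
    Even (z.re + z.im) := by
  obtain ⟨c, rfl⟩ := h
  exact ⟨c.re, by simp only [Zsqrtd.re_mul, Zsqrtd.im_mul]; ring⟩

theorem mul_eq_mul_add_mul_of_toComplex_eq {α α' β γ ε z : GaussianInt} {ϖ : ℝ} (hβ : β ≠ 0)
    (hϖ : ϖ ≠ 0)
    (h : (α : ℂ) * (γ * ϖ / β) = ε * ((α' : ℂ) * (γ * ϖ / β)) + z * ϖ) :
    α * γ = ε * α' * γ + z * β := by
  have hβc : (β : ℂ) ≠ 0 := toComplex_eq_zero.not.mpr hβ
  have hϖc : (ϖ : ℂ) ≠ 0 := by exact_mod_cast hϖ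
  field_simp at h
  apply toComplex_injective
  simp only [map_add, map_mul]
  linear_combination h

end GaussianInt

open GaussianInt

theorem stmt_11 (β : GaussianInt) (hβ : IsCoprime β (⟨1, 1⟩ : GaussianInt))
    (ϖ : ℝ) (hϖ : 0 < ϖ) (α α' : GaussianInt) (m n : ℤ)
    (h : (α : ℂ) * ((1 + I) * ϖ / (β : ℂ)) =
        (-1 : ℂ) ^ (m + n) * ((α' : ℂ) * ((1 + I) * ϖ / (β : ℂ))) +
          ((m : ℂ) + n * I) * ϖ) :
    β ∣ (α - α') := by
  have hβ0 : β ≠ 0 := by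
    rintro rfl
    exact not_isUnit_one_add_I (isCoprime_zero_left.mp hβ)
  set ε : GaussianInt := (((m + n).negOnePow : ℤ) : GaussianInt)
  have key : α * ⟨1, 1⟩ = ε * α' * ⟨1, 1⟩ + ⟨m, n⟩ * β := by
    refine mul_eq_mul_add_mul_of_toComplex_eq hβ0 hϖ.ne' ?_
    have hεc : (ε : ℂ) = (-1) ^ (m + n) := by rw [map_intCast, Int.cast_negOnePow]
    simpa only [hεc, toComplex_def', Int.cast_one, one_mul] using h
  obtain ⟨c, hc⟩ : (⟨1, 1⟩ : GaussianInt) ∣ ⟨m, n⟩ :=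
    hβ.symm.dvd_of_dvd_mul_right ⟨α - ε * α', by linear_combination -key⟩
  have heven : Even (m + n) := even_re_add_im_of_one_add_I_dvd (z := ⟨m, n⟩) ⟨c, hc⟩
  have hε : ε = 1 := by simp only [ε, Int.negOnePow_even _ heven, Units.val_one, Int.cast_one]
  refine ⟨c, mul_left_cancel₀ (show (⟨1, 1⟩ : GaussianInt) ≠ 0 by decide) ?_⟩
  rw [hε] at key
  linear_combination key + β * hc
end

section
/- Let f ∈ 𝒪[x] be a monic polynomial over the ring of integers 𝒪 of a number field, let π ∈ 𝒪 be a prime with residue field 𝒪/π𝒪 of cardinality q, and let f̃ be the monic polynomial whose roots are the q-th powers of the roots of f. Then f̃ ≡ f (mod π𝒪[x]). -/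
open Polynomial

set_option synthInstance.maxHeartbeats 1000000 in

theorem stmt_18 (F : Type*) [Field F] [NumberField F]
    (π : NumberField.RingOfIntegers F) (hπ : Prime π)
    (q : ℕ) (hq : q = Nat.card (NumberField.RingOfIntegers F ⧸ Ideal.span {π}))
    (E : Type*) [Field E] [Algebra F E]
    (N : ℕ) (r : Fin N → E)
    (f g : (NumberField.RingOfIntegers F)[X]) (hf : f.Monic) (hg : g.Monic)
    (hfr : f.map ((algebraMap F E).comp
        (algebraMap (NumberField.RingOfIntegers F) F)) = ∏ i, (X - C (r i)))
    (hgr : g.map ((algebraMap F E).comp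
        (algebraMap (NumberField.RingOfIntegers F) F)) = ∏ i, (X - C (r i ^ q))) :
    f.map (Ideal.Quotient.mk (Ideal.span {π})) =
      g.map (Ideal.Quotient.mk (Ideal.span {π})) := by
  have halg : algebraMap (NumberField.RingOfIntegers F) E = (algebraMap F E).comp (algebraMap (NumberField.RingOfIntegers F) F) :=
    IsScalarTower.algebraMap_eq (NumberField.RingOfIntegers F) F E
  have hinjOE : Function.Injective (algebraMap (NumberField.RingOfIntegers F) E) := by
    rw [halg]
    exact (algebraMap F E).injective.comp (NumberField.RingOfIntegers.coe_injective)
  -- the ideal P = (π) is maximal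
  set P : Ideal (NumberField.RingOfIntegers F) := Ideal.span {π} with hP
  have hPprime : P.IsPrime := (Ideal.span_singleton_prime hπ.ne_zero).mpr hπ
  have hPbot : P ≠ ⊥ := by
    simpa [hP, Ideal.span_singleton_eq_bot] using hπ.ne_zero
  have hPmax : P.IsMaximal := Ideal.IsPrime.isMaximal hPprime hPbot
  -- roots are integral
  have hint : ∀ i, IsIntegral (NumberField.RingOfIntegers F) (r i) := by
    intro i
    refine ⟨f, hf, ?_⟩
    have : (f.map ((algebraMap F E).comp (algebraMap (NumberField.RingOfIntegers F) F))).eval (r i) = 0 := by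
      rw [hfr]
      simp [Polynomial.eval_prod, Finset.prod_eq_zero (Finset.mem_univ i)]
    rwa [← halg, Polynomial.eval_map] at this
  -- the integral closure A and the roots as its elements
  set A := integralClosure (NumberField.RingOfIntegers F) E with hA
  set s : Fin N → A := fun i => ⟨r i, hint i⟩ with hs
  -- a maximal ideal Q of A over P
  obtain ⟨Q, hQmax, hQcomap⟩ := Ideal.exists_ideal_over_maximal_of_isIntegral
    (S := A) P (by
      rw [(RingHom.injective_iff_ker_eq_bot _).mp]
      · exact bot_le
      · intro a b hab
        exact hinjOE (by simpa [hA] using congrArg (algebraMap A E) hab))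
  haveI := hQmax
  haveI := hPmax
  letI := Ideal.Quotient.field P
  -- the residue fields
  haveI : Fintype ((NumberField.RingOfIntegers F) ⧸ P) := @Fintype.ofFinite _ (Ideal.finiteQuotientOfFreeOfNeBot P hPbot)
  have hqcard : q = Fintype.card ((NumberField.RingOfIntegers F) ⧸ P) := by
    rw [hq, Nat.card_eq_fintype_card]
  -- the induced injective map on residue fields
  have hle : P ≤ Q.comap (algebraMap (NumberField.RingOfIntegers F) A) := le_of_eq hQcomap.symm
  set ι : ((NumberField.RingOfIntegers F) ⧸ P) →+* (A ⧸ Q) := Ideal.quotientMap Q (algebraMap (NumberField.RingOfIntegers F) A) hle with hι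
  have hιinj : Function.Injective ι :=
    Ideal.quotientMap_injective' (le_of_eq hQcomap)
  -- characteristic
  obtain ⟨p, hp⟩ := CharP.exists ((NumberField.RingOfIntegers F) ⧸ P)
  haveI := hp
  obtain ⟨n, hpprime, hcard⟩ := FiniteField.card ((NumberField.RingOfIntegers F) ⧸ P) p
  haveI : Fact p.Prime := ⟨hpprime⟩
  haveI : CharP (A ⧸ Q) p := charP_of_injective_ringHom hιinj p
  have hqpn : q = p ^ (n : ℕ) := by rw [hqcard, hcard]
  -- Frobenius on A ⧸ Q
  set φ : (A ⧸ Q) →+* (A ⧸ Q) := iterateFrobenius (A ⧸ Q) p n with hφ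
  have hφdef : ∀ x : A ⧸ Q, φ x = x ^ q := by
    intro x; rw [hφ, iterateFrobenius_def, hqpn]
  -- the composite (NumberField.RingOfIntegers F) → A ⧸ Q
  set h : (NumberField.RingOfIntegers F) →+* (A ⧸ Q) := (Ideal.Quotient.mk Q).comp (algebraMap (NumberField.RingOfIntegers F) A) with hh
  have hfact : h = ι.comp (Ideal.Quotient.mk P) := by
    rw [hι, Ideal.quotientMap_comp_mk]
  -- key: φ fixes the image of (NumberField.RingOfIntegers F)
  have hfix : ∀ c : (NumberField.RingOfIntegers F), φ (h c) = h c := by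
    intro c
    rw [hφdef, hfact]
    simp only [RingHom.comp_apply]
    rw [← map_pow, hqcard, FiniteField.pow_card]
  -- maps of f and g into A
  have hfa : f.map (algebraMap (NumberField.RingOfIntegers F) A) = ∏ i, (X - C (s i)) := by
    apply Polynomial.map_injective (algebraMap A E) (Subtype.val_injective)
    rw [Polynomial.map_map, ← IsScalarTower.algebraMap_eq, halg, hfr, Polynomial.map_prod]
    simp only [Polynomial.map_sub, Polynomial.map_X, Polynomial.map_C, map_pow]
    rfl
  have hga : g.map (algebraMap (NumberField.RingOfIntegers F) A) = ∏ i, (X - C (s i ^ q)) := by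
    apply Polynomial.map_injective (algebraMap A E) (Subtype.val_injective)
    rw [Polynomial.map_map, ← IsScalarTower.algebraMap_eq, halg, hgr, Polynomial.map_prod]
    simp only [Polynomial.map_sub, Polynomial.map_X, Polynomial.map_C, Polynomial.map_pow, map_pow]
    rfl
  -- maps into A ⧸ Q agree
  have hmain : f.map h = g.map h := by
    have h1 : f.map h = ∏ i, (X - C (Ideal.Quotient.mk Q (s i))) := by
      rw [hh, ← Polynomial.map_map, hfa, Polynomial.map_prod]
      simp
    have h2 : g.map h = ∏ i, (X - C ((Ideal.Quotient.mk Q (s i)) ^ q)) := by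
      rw [hh, ← Polynomial.map_map, hga, Polynomial.map_prod]
      simp
    have h3 : (f.map h).map φ = f.map h := by
      rw [Polynomial.map_map]
      congr 1
      ext c
      exact hfix c
    rw [h1, Polynomial.map_prod] at h3
    simp only [Polynomial.map_sub, Polynomial.map_X, Polynomial.map_C, hφdef] at h3
    rw [h1, ← h3, h2]
  -- descend to (NumberField.RingOfIntegers F) ⧸ P
  rw [hfact] at hmain
  simp only [← Polynomial.map_map] at hmain
  exact Polynomial.map_injective ι hιinj hmain
end
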